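/- Let σ, s ≥ 0 and let g be in the Sobolev space H^σ(T^ν, H^s_0(T^d, R^d)) of functions with zero space-average, with Fourier coefficients ĝ(ℓ,j) for ℓ ∈ Z^ν, j ∈ Z^d\{0}. Define u by û(ℓ,j) = ĝ(ℓ,j)/(i ω·ℓ + |j|²). Then u ∈ H^σ(T^ν, H^{s+2}_0) with ‖u‖_{σ,s+2} ≤ ‖g‖_{σ,s}, and u is the unique zero-space-average solution of (ω·∂_φ − Δ) u = g. -/

import Mathlib

/-!
On the Fourier mode `(ℓ, j)` with `j ≠ 0` the operator `L_ω` is multiplication by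
`λ = i ω·ℓ + |j|²`, whose real part `|j|² = ⟨j⟩²` bounds `|λ|` from below. Dividing by `λ`
therefore gains the weight `⟨j⟩⁴` in `‖·‖²`, mode by mode, which gives the estimate after
summation; and `λ ≠ 0` on these modes gives uniqueness among zero-average solutions.
-/

noncomputable section

/-- Euclidean norm of a lattice vector. -/
def latNorm {d : ℕ} (ξ : Fin d → ℤ) : ℝ := Real.sqrt (∑ i, ((ξ i : ℝ)) ^ 2)

/-- Japanese bracket `⟨ξ⟩ = max (1, |ξ|)`. -/
def jb {d : ℕ} (ξ : Fin d → ℤ) : ℝ := max 1 (latNorm ξ)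

/-- Euclidean norm of a vector of Fourier coefficients in `ℂ^d`. -/
def cnorm {n : ℕ} (a : Fin n → ℂ) : ℝ := Real.sqrt (∑ j, ‖a j‖ ^ 2)

/-- The mixed Sobolev norm `‖u‖_{σ,s}` of a function on `𝕋^ν × 𝕋^d`, via its Fourier
coefficients `û(ℓ,j)`: `‖u‖²_{σ,s} = Σ_{ℓ,j} ⟨ℓ⟩^{2σ} ⟨j⟩^{2s} |û(ℓ,j)|²`. -/
def sobNorm2 {ν d n : ℕ} (σ s : ℝ) (u : (Fin ν → ℤ) × (Fin d → ℤ) → Fin n → ℂ) : ℝ :=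
  Real.sqrt (∑' p : (Fin ν → ℤ) × (Fin d → ℤ),
    jb p.1 ^ (2 * σ) * jb p.2 ^ (2 * s) * cnorm (u p) ^ 2)

/-- The eigenvalue `i ω·ℓ + |j|²` of `L_ω = ω·∂_φ − Δ` on the Fourier mode `(ℓ, j)`. -/
def eigLω {ν d : ℕ} (ω : Fin ν → ℝ) (p : (Fin ν → ℤ) × (Fin d → ℤ)) : ℂ :=
  Complex.I * ((∑ i, ω i * (p.1 i : ℝ) : ℝ) : ℂ) + ((latNorm p.2 ^ 2 : ℝ) : ℂ)

lemma one_le_latNorm {d : ℕ} {ξ : Fin d → ℤ} (hξ : ξ ≠ 0) : 1 ≤ latNorm ξ := by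
  obtain ⟨i, hi⟩ := Function.ne_iff.mp hξ
  have hi_sq : (1 : ℝ) ≤ (ξ i : ℝ) ^ 2 := by
    rw [one_le_sq_iff_one_le_abs]
    exact_mod_cast Int.one_le_abs hi
  rw [latNorm, Real.one_le_sqrt]
  exact hi_sq.trans
    (Finset.single_le_sum (f := fun k => (ξ k : ℝ) ^ 2) (fun _ _ => sq_nonneg _)
      (Finset.mem_univ i))

lemma jb_eq_latNorm {d : ℕ} {ξ : Fin d → ℤ} (hξ : ξ ≠ 0) : jb ξ = latNorm ξ :=
  max_eq_right (one_le_latNorm hξ)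

lemma jb_pos {d : ℕ} (ξ : Fin d → ℤ) : 0 < jb ξ :=
  one_pos.trans_le (le_max_left _ _)

lemma jb_rpow_two_mul_add_two {d : ℕ} (ξ : Fin d → ℤ) (s : ℝ) :
    jb ξ ^ (2 * (s + 2)) = jb ξ ^ (2 * s) * (jb ξ ^ 2) ^ 2 := by
  rw [mul_add, Real.rpow_add (jb_pos ξ), show (2 : ℝ) * 2 = (4 : ℕ) by norm_num,
    Real.rpow_natCast]
  ring

lemma cnorm_zero {n : ℕ} : cnorm (0 : Fin n → ℂ) = 0 := by
  simp [cnorm]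

lemma cnorm_smul {n : ℕ} (c : ℂ) (a : Fin n → ℂ) : cnorm (c • a) = ‖c‖ * cnorm a := by
  simp only [cnorm, Pi.smul_apply, smul_eq_mul, norm_mul, mul_pow, ← Finset.mul_sum]
  rw [Real.sqrt_mul (by positivity), Real.sqrt_sq (norm_nonneg c)]

lemma sobNorm2_summand_nonneg {ν d n : ℕ} (σ s : ℝ) (p : (Fin ν → ℤ) × (Fin d → ℤ))
    (a : Fin n → ℂ) : 0 ≤ jb p.1 ^ (2 * σ) * jb p.2 ^ (2 * s) * cnorm a ^ 2 := by
  have := jb_pos p.1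
  have := jb_pos p.2
  positivity

lemma sobNorm2_le_of_summand_le {ν d m n : ℕ} {σ s σ' s' : ℝ}
    {u : (Fin ν → ℤ) × (Fin d → ℤ) → Fin m → ℂ} {g : (Fin ν → ℤ) × (Fin d → ℤ) → Fin n → ℂ}
    (hg : Summable fun p : (Fin ν → ℤ) × (Fin d → ℤ) =>
      jb p.1 ^ (2 * σ') * jb p.2 ^ (2 * s') * cnorm (g p) ^ 2)
    (hle : ∀ p : (Fin ν → ℤ) × (Fin d → ℤ),
      jb p.1 ^ (2 * σ) * jb p.2 ^ (2 * s) * cnorm (u p) ^ 2 ≤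
        jb p.1 ^ (2 * σ') * jb p.2 ^ (2 * s') * cnorm (g p) ^ 2) :
    sobNorm2 σ s u ≤ sobNorm2 σ' s' g :=
  Real.sqrt_le_sqrt <| Summable.tsum_le_tsum hle
    (hg.of_nonneg_of_le (fun p => sobNorm2_summand_nonneg σ s p (u p)) hle) hg

lemma eigLω_re {ν d : ℕ} (ω : Fin ν → ℝ) (p : (Fin ν → ℤ) × (Fin d → ℤ)) :
    (eigLω ω p).re = latNorm p.2 ^ 2 := by
  simp [eigLω, -Complex.ofReal_pow]

lemma jb_sq_le_norm_eigLω {ν d : ℕ} (ω : Fin ν → ℝ) {p : (Fin ν → ℤ) × (Fin d → ℤ)}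
    (hp : p.2 ≠ 0) : jb p.2 ^ 2 ≤ ‖eigLω ω p‖ := by
  rw [jb_eq_latNorm hp, ← eigLω_re ω p]
  exact Complex.re_le_norm _

lemma eigLω_ne_zero {ν d : ℕ} (ω : Fin ν → ℝ) {p : (Fin ν → ℤ) × (Fin d → ℤ)}
    (hp : p.2 ≠ 0) : eigLω ω p ≠ 0 := by
  have h := (pow_pos (jb_pos p.2) 2).trans_le (jb_sq_le_norm_eigLω ω hp)
  exact norm_pos_iff.mp h

lemma sobNorm2_summand_inv_eigLω_smul_le {ν d n : ℕ} (ω : Fin ν → ℝ) (σ s : ℝ)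
    {p : (Fin ν → ℤ) × (Fin d → ℤ)} (hp : p.2 ≠ 0) (a : Fin n → ℂ) :
    jb p.1 ^ (2 * σ) * jb p.2 ^ (2 * (s + 2)) * cnorm ((eigLω ω p)⁻¹ • a) ^ 2 ≤
      jb p.1 ^ (2 * σ) * jb p.2 ^ (2 * s) * cnorm a ^ 2 := by
  have hgain : jb p.2 ^ 2 * ‖eigLω ω p‖⁻¹ ≤ 1 := by
    rw [← div_eq_mul_inv, div_le_one (norm_pos_iff.mpr (eigLω_ne_zero ω hp))]
    exact jb_sq_le_norm_eigLω ω hp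
  calc jb p.1 ^ (2 * σ) * jb p.2 ^ (2 * (s + 2)) * cnorm ((eigLω ω p)⁻¹ • a) ^ 2
      = jb p.1 ^ (2 * σ) * jb p.2 ^ (2 * s) * cnorm a ^ 2 *
          (jb p.2 ^ 2 * ‖eigLω ω p‖⁻¹) ^ 2 := by
        rw [jb_rpow_two_mul_add_two, cnorm_smul, norm_inv]
        ring
    _ ≤ jb p.1 ^ (2 * σ) * jb p.2 ^ (2 * s) * cnorm a ^ 2 * 1 :=
        mul_le_mul_of_nonneg_left (pow_le_one₀ (by have := jb_pos p.2; positivity) hgain)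
          (sobNorm2_summand_nonneg σ s p a)
    _ = jb p.1 ^ (2 * σ) * jb p.2 ^ (2 * s) * cnorm a ^ 2 := mul_one _

lemma eq_of_eigLω_smul_eq {ν d n : ℕ} (ω : Fin ν → ℝ)
    {v w : (Fin ν → ℤ) × (Fin d → ℤ) → Fin n → ℂ}
    (hv : ∀ ℓ : Fin ν → ℤ, v (ℓ, 0) = 0) (hw : ∀ ℓ : Fin ν → ℤ, w (ℓ, 0) = 0)
    (h : ∀ p : (Fin ν → ℤ) × (Fin d → ℤ), eigLω ω p • v p = eigLω ω p • w p) : v = w := by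
  funext ⟨ℓ, j⟩
  rcases eq_or_ne j 0 with rfl | hj
  · rw [hv ℓ, hw ℓ]
  · exact smul_right_injective _ (eigLω_ne_zero ω (p := (ℓ, j)) hj) (h (ℓ, j))

theorem stmt_5_general {ν d : ℕ} (σ s : ℝ) (ω : Fin ν → ℝ)
    (g : (Fin ν → ℤ) × (Fin d → ℤ) → Fin d → ℂ)
    (hg0 : ∀ ℓ : Fin ν → ℤ, g (ℓ, 0) = 0)
    (hgsum : Summable fun p : (Fin ν → ℤ) × (Fin d → ℤ) =>
      jb p.1 ^ (2 * σ) * jb p.2 ^ (2 * s) * cnorm (g p) ^ 2)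
    (u : (Fin ν → ℤ) × (Fin d → ℤ) → Fin d → ℂ)
    (hu : ∀ p : (Fin ν → ℤ) × (Fin d → ℤ),
      u p = if p.2 = 0 then 0 else (eigLω ω p)⁻¹ • g p) :
    (∀ ℓ : Fin ν → ℤ, u (ℓ, 0) = 0) ∧
    sobNorm2 σ (s + 2) u ≤ sobNorm2 σ s g ∧
    (∀ p : (Fin ν → ℤ) × (Fin d → ℤ), eigLω ω p • u p = g p) ∧
    (∀ v : (Fin ν → ℤ) × (Fin d → ℤ) → Fin d → ℂ,
      (∀ ℓ : Fin ν → ℤ, v (ℓ, 0) = 0) →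
      (∀ p : (Fin ν → ℤ) × (Fin d → ℤ), eigLω ω p • v p = g p) → v = u) := by
  have hu0 : ∀ ℓ : Fin ν → ℤ, u (ℓ, 0) = 0 := fun ℓ => by simp [hu]
  have hsolve : ∀ p : (Fin ν → ℤ) × (Fin d → ℤ), eigLω ω p • u p = g p := by
    rintro ⟨ℓ, j⟩
    rcases eq_or_ne j 0 with rfl | hj
    · rw [hu0 ℓ, hg0 ℓ, smul_zero]
    · rw [hu, if_neg hj, smul_inv_smul₀ (eigLω_ne_zero ω (p := (ℓ, j)) hj)]
  refine ⟨hu0, sobNorm2_le_of_summand_le hgsum fun p => ?_, hsolve,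
    fun v hv0 hv => eq_of_eigLω_smul_eq ω hv0 hu0 fun p => (hv p).trans (hsolve p).symm⟩
  rw [hu p]
  split_ifs with hp
  · rw [cnorm_zero, zero_pow two_ne_zero, mul_zero]
    exact sobNorm2_summand_nonneg σ s p (g p)
  · exact sobNorm2_summand_inv_eigLω_smul_le ω σ s hp (g p)

/-- let `σ, s ≥ 0` and let `g` have zero space-average (`ĝ(ℓ,0) = 0`) and
finite `‖·‖_{σ,s}` norm. Define `u` by `û(ℓ,j) = ĝ(ℓ,j)/(i ω·ℓ + |j|²)` for `j ≠ 0`,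
`û(ℓ,0) = 0`. Then `u` has zero space-average, `‖u‖_{σ,s+2} ≤ ‖g‖_{σ,s}`, it solves
`(ω·∂_φ − Δ) u = g` (i.e. mode-wise `(i ω·ℓ + |j|²) û(ℓ,j) = ĝ(ℓ,j)`), and it is the
unique zero-space-average solution. -/
theorem stmt_5 {ν d : ℕ} (σ s : ℝ) (hσ : 0 ≤ σ) (hs : 0 ≤ s) (ω : Fin ν → ℝ)
    (g : (Fin ν → ℤ) × (Fin d → ℤ) → Fin d → ℂ)
    (hg0 : ∀ ℓ : Fin ν → ℤ, g (ℓ, 0) = 0)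
    (hgsum : Summable fun p : (Fin ν → ℤ) × (Fin d → ℤ) =>
      jb p.1 ^ (2 * σ) * jb p.2 ^ (2 * s) * cnorm (g p) ^ 2)
    (u : (Fin ν → ℤ) × (Fin d → ℤ) → Fin d → ℂ)
    (hu : ∀ p : (Fin ν → ℤ) × (Fin d → ℤ),
      u p = if p.2 = 0 then 0 else (eigLω ω p)⁻¹ • g p) :
    (∀ ℓ : Fin ν → ℤ, u (ℓ, 0) = 0) ∧
    sobNorm2 σ (s + 2) u ≤ sobNorm2 σ s g ∧
    (∀ p : (Fin ν → ℤ) × (Fin d → ℤ), eigLω ω p • u p = g p) ∧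
    (∀ v : (Fin ν → ℤ) × (Fin d → ℤ) → Fin d → ℂ,
      (∀ ℓ : Fin ν → ℤ, v (ℓ, 0) = 0) →
      (∀ p : (Fin ν → ℤ) × (Fin d → ℤ), eigLω ω p • v p = g p) → v = u) :=
  stmt_5_general σ s ω g hg0 hgsum u hu
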